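/- Splitting property for fixing: let P1, P2 be propositional normal programs with atoms(P1) ∩ heads(P2) = ∅, and let M1 be an answer set of P1. Then every answer set M of P2 ∪ fix(P1, M1) has the form M = M1 ∪ M2 where M2 is an answer set of the partial evaluation e_{atoms(P1)}(P2, M1), obtained by deleting rules of P2 whose body contains a literal over atoms(P1) false in M1 and removing from the remaining rules all literals over atoms(P1). -/

import Mathlib

/-- A propositional normal rule: optional head (none = constraint),
positive body atoms, negative body atoms. -/
structure Rule (A : Type) where
  head : Option A
  pos : Set A
  neg : Set A

/-- The body of a rule is true in interpretation `M`. -/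
def Rule.bodyTrue {A : Type} (r : Rule A) (M : Set A) : Prop :=
  r.pos ⊆ M ∧ ∀ a ∈ r.neg, a ∉ M

/-- A rule is satisfied by `M`. -/
def Rule.sat {A : Type} (r : Rule A) (M : Set A) : Prop :=
  r.bodyTrue M → ∃ a, r.head = some a ∧ a ∈ M

/-- `M` is a model of program `P`. -/
def isModel {A : Type} (P : Set (Rule A)) (M : Set A) : Prop :=
  ∀ r ∈ P, r.sat M

/-- The (GL/FLP) reduct of `P` w.r.t. `M`: keep rules whose negative body is
disjoint from `M`, deleting the negative literals. -/
def reduct {A : Type} (P : Set (Rule A)) (M : Set A) : Set (Rule A) :=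
  {r' | ∃ r ∈ P, (∀ a ∈ r.neg, a ∉ M) ∧ r' = ⟨r.head, r.pos, ∅⟩}

/-- `M` is an answer set (stable model) of `P`: it is the least model of the reduct. -/
def isAnswerSet {A : Type} (P : Set (Rule A)) (M : Set A) : Prop :=
  isModel (reduct P M) M ∧ ∀ N, isModel (reduct P M) N → M ⊆ N

/-- Atoms occurring in a rule. -/
def Rule.atoms {A : Type} (r : Rule A) : Set A :=
  {a | r.head = some a} ∪ r.pos ∪ r.neg

/-- Atoms occurring in a program. -/
def progAtoms {A : Type} (P : Set (Rule A)) : Set A :=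
  ⋃ r ∈ P, r.atoms

/-- Head atoms of a program. -/
def progHeads {A : Type} (P : Set (Rule A)) : Set A :=
  {a | ∃ r ∈ P, r.head = some a}

/-- The fact `a ←`. -/
def factRule {A : Type} (a : A) : Rule A := ⟨some a, ∅, ∅⟩

/-- The constraint `← a`. -/
def constraintRule {A : Type} (a : A) : Rule A := ⟨none, {a}, ∅⟩

/-- `fix(U, M)`: facts for the atoms of `U` in `M`, constraints for the atoms
of `U` not in `M`. -/
def fixProg {A : Type} (U : Set A) (M : Set A) : Set (Rule A) :=
  {r | ∃ a ∈ M ∩ U, r = factRule a} ∪ {r | ∃ a ∈ U \ M, r = constraintRule a}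

/-- Partial evaluation `e_U(P, X)`: delete rules whose body over `U` conflicts
with `X`, and remove all `U`-literals from the remaining rules. -/
def partialEval {A : Type} (U X : Set A) (P : Set (Rule A)) : Set (Rule A) :=
  {r' | ∃ r ∈ P,
      (∀ a ∈ r.pos, a ∈ U → a ∈ X) ∧ (∀ a ∈ r.neg, a ∈ U → a ∉ X) ∧
      r' = ⟨r.head, r.pos \ U, r.neg \ U⟩}

/-! The facts and constraints of `fix(P1, M1)` force every answer set `M` of `P2 ∪ fix(P1, M1)`
to agree with `M1` on `U = atoms(P1)`, which contains `M1` because answer sets consist of head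
atoms. With the `U`-atoms frozen to their `M1`-values, a rule of `P2` fires in the reduct
w.r.t. `M` exactly when its partial evaluation fires in the reduct w.r.t. `M \ U`; as the heads
of `P2` avoid `U`, a model `N` of the reduct of `e_U(P2, M1)` yields the model `M1 ∪ (N \ U)`
of the reduct of `P2 ∪ fix(P1, M1)`, so minimality transfers in both directions. -/

section

variable {A : Type} {P Q : Set (Rule A)} {M N U X : Set A}

theorem isModel_reduct_iff :
    isModel (reduct P M) N ↔
      ∀ r ∈ P, (∀ a ∈ r.neg, a ∉ M) → r.pos ⊆ N → ∃ a, r.head = some a ∧ a ∈ N := by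
  constructor
  · intro h r hr hneg hpos
    exact h ⟨r.head, r.pos, ∅⟩ ⟨r, hr, hneg, rfl⟩ ⟨hpos, fun _ ha => (Set.notMem_empty _ ha).elim⟩
  · rintro h _ ⟨r, hr, hneg, rfl⟩ ⟨hpos, -⟩
    exact h r hr hneg hpos

theorem isModel_reduct_union :
    isModel (reduct (P ∪ Q) M) N ↔ isModel (reduct P M) N ∧ isModel (reduct Q M) N := by
  simp only [isModel_reduct_iff, Set.mem_union, or_imp, forall_and]

theorem isModel_reduct_fixProg_iff :
    isModel (reduct (fixProg U X) M) N ↔ X ∩ U ⊆ N ∧ N ∩ U ⊆ X := by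
  simp only [isModel_reduct_iff, fixProg, Set.mem_union, Set.mem_ofPred_eq, or_imp, forall_and,
    forall_exists_index, and_imp, factRule, constraintRule]
  constructor
  · rintro ⟨hfact, hconstraint⟩
    refine ⟨fun a ha => ?_, fun a ⟨haN, haU⟩ => by_contra fun haX => ?_⟩
    · obtain ⟨b, hb, hbN⟩ := hfact _ a ha rfl (by simp) (Set.empty_subset N)
      exact Option.some_injective _ hb ▸ hbN
    · obtain ⟨b, hb, -⟩ := hconstraint _ a ⟨haU, haX⟩ rfl (by simp) (Set.singleton_subset_iff.2 haN)
      cases hb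
  · rintro ⟨hXN, hNX⟩
    refine ⟨?_, ?_⟩
    · rintro _ a ha rfl - -
      exact ⟨a, rfl, hXN ha⟩
    · rintro _ a ⟨haU, haX⟩ rfl - hpos
      exact absurd (hNX ⟨hpos rfl, haU⟩) haX

theorem progHeads_subset_progAtoms : progHeads P ⊆ progAtoms P :=
  fun _ ⟨_, hr, ha⟩ => Set.mem_biUnion hr (Or.inl (Or.inl ha))

theorem isAnswerSet.subset_progHeads (h : isAnswerSet P M) : M ⊆ progHeads P := by
  have hmodel : isModel (reduct P M) (M ∩ progHeads P) :=
    isModel_reduct_iff.2 fun r hr hneg hpos => by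
      obtain ⟨a, ha, haM⟩ := isModel_reduct_iff.1 h.1 r hr hneg (hpos.trans Set.inter_subset_left)
      exact ⟨a, ha, haM, r, hr, ha⟩
  exact fun a ha => (h.2 _ hmodel ha).2

theorem isModel_reduct_partialEval_iff (hP : Disjoint (progHeads P) U) (hM : M ∩ U = X ∩ U) :
    isModel (reduct (partialEval U X P) (M \ U)) N ↔ isModel (reduct P M) (X ∩ U ∪ N \ U) := by
  have hMX : ∀ a ∈ U, a ∈ M ↔ a ∈ X := fun a haU => by simpa [haU] using Set.ext_iff.1 hM a
  have hneg (S : Set A) :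
      (∀ a ∈ S, a ∉ M) ↔ (∀ a ∈ S, a ∈ U → a ∉ X) ∧ ∀ a ∈ S \ U, a ∉ M \ U := by
    constructor
    · intro h
      exact ⟨fun a ha haU haX => h a ha ((hMX a haU).2 haX), fun a ha haM => h a ha.1 haM.1⟩
    · rintro ⟨hnegU, hnegO⟩ a ha haM
      by_cases haU : a ∈ U
      · exact hnegU a ha haU ((hMX a haU).1 haM)
      · exact hnegO a ⟨ha, haU⟩ ⟨haM, haU⟩
  have hpos (S : Set A) : S ⊆ X ∩ U ∪ N \ U ↔ (∀ a ∈ S, a ∈ U → a ∈ X) ∧ S \ U ⊆ N := by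
    grind
  have hhead (a : A) (haU : a ∉ U) : a ∈ X ∩ U ∪ N \ U ↔ a ∈ N := by
    grind
  rw [isModel_reduct_iff, isModel_reduct_iff]
  constructor
  · intro h r hr hnegM hposN
    obtain ⟨hnegU, hnegO⟩ := (hneg r.neg).1 hnegM
    obtain ⟨hposU, hposO⟩ := (hpos r.pos).1 hposN
    obtain ⟨a, ha, haN⟩ := h _ ⟨r, hr, hposU, hnegU, rfl⟩ hnegO hposO
    exact ⟨a, ha, (hhead a (Set.disjoint_left.1 hP ⟨r, hr, ha⟩)).2 haN⟩
  · rintro h _ ⟨r, hr, hposU, hnegU, rfl⟩ hnegO hposO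
    obtain ⟨a, ha, haN⟩ := h r hr ((hneg r.neg).2 ⟨hnegU, hnegO⟩) ((hpos r.pos).2 ⟨hposU, hposO⟩)
    exact ⟨a, ha, (hhead a (Set.disjoint_left.1 hP ⟨r, hr, ha⟩)).1 haN⟩

end

/-- Splitting property for fixing: if `atoms(P1) ∩ heads(P2) = ∅` and `M1` is an
answer set of `P1`, then every answer set `M` of `P2 ∪ fix(P1,M1)` has the form
`M = M1 ∪ M2` for some answer set `M2` of `e_{atoms(P1)}(P2, M1)`. -/
theorem fix_splitting {A : Type} (P1 P2 : Set (Rule A))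
    (hstrat : progAtoms P1 ∩ progHeads P2 = ∅)
    (M1 : Set A) (hM1 : isAnswerSet P1 M1)
    (M : Set A) (hM : isAnswerSet (P2 ∪ fixProg (progAtoms P1) M1) M) :
    ∃ M2 : Set A, M = M1 ∪ M2 ∧ isAnswerSet (partialEval (progAtoms P1) M1 P2) M2 := by
  set U := progAtoms P1
  have hheads : Disjoint (progHeads P2) U := (Set.disjoint_iff_inter_eq_empty.2 hstrat).symm
  have hM1U : M1 ∩ U = M1 :=
    Set.inter_eq_left.2 (hM1.subset_progHeads.trans progHeads_subset_progAtoms)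
  obtain ⟨hmodelP2, hmodelFix⟩ := isModel_reduct_union.1 hM.1
  obtain ⟨hM1M, hMM1⟩ := isModel_reduct_fixProg_iff.1 hmodelFix
  have hMU : M ∩ U = M1 ∩ U :=
    (Set.subset_inter hMM1 Set.inter_subset_right).antisymm
      (Set.subset_inter hM1M Set.inter_subset_right)
  have hsplit : M = M1 ∩ U ∪ M \ U := by rw [← hMU, Set.inter_union_sdiff]
  refine ⟨M \ U, hM1U ▸ hsplit, ?_, fun N hN => ?_⟩
  · rwa [isModel_reduct_partialEval_iff hheads hMU, sdiff_idem, ← hsplit]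
  · have hmodel : isModel (reduct (P2 ∪ fixProg U M1) M) (M1 ∩ U ∪ N \ U) :=
      isModel_reduct_union.2 ⟨(isModel_reduct_partialEval_iff hheads hMU).1 hN,
        isModel_reduct_fixProg_iff.2 ⟨Set.subset_union_left, by
          rw [Set.union_inter_distrib_right, Set.sdiff_inter_self, Set.union_empty]
          exact Set.inter_subset_left.trans Set.inter_subset_left⟩⟩
    intro a ⟨haM, haU⟩
    exact ((hM.2 _ hmodel haM).resolve_left fun h => haU h.2).1
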